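/- Compatibility of erasure orders: let t be a labeled binary tree of size n and, for 2 ≤ ℓ ≤ n, let t^ℓ be the unary-binary subtree spanned by the leaves labeled {0,1,...,ℓ}. If b_1^ℓ ≺ b_2^ℓ ≺ ... ≺ b_{ℓ−1}^ℓ is the order in which the branching nodes of t^ℓ are removed by iterated best-of-three erasure of t^ℓ, and ≺_t is the removal order of the branching nodes of t under iterated best-of-three erasure of t, then b_i^ℓ ≺_t b_{i+1}^ℓ for all 1 ≤ i ≤ ℓ−2. -/

import Mathlib

/-!
Record every erasure by the position, in `t`, of the erased branch point, and follow one
erasure of `t`, with erased label `j`. If `j ≤ ℓ`, the erased cherry lies in the span and is the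
one the span erases: along the selection path the child holding the cherry carries two labels
`≤ ℓ` and a sibling in the span at least one more, so the three smallest labels, which decide the
best-of-three rule, are span labels and the rule chooses the same child in `t` and in the span.
After relabelling, the span of the erased tree is its `(ℓ - 1)`-span. If `j > ℓ`, the span is
unchanged. By induction, the erasure sequence of the span, read in `t`, is a subsequence of the
erasure sequence of `t`, which has no repetitions; so the two orders agree.
-/

/-- A plane binary tree whose non-root leaves carry natural-number labels.
The root leaf (always labeled 0) is left implicit: an `LTree` is the part of
the tree above the unique edge incident to the root. -/
inductive LTree where
  | leaf : ℕ → LTree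
  | node : LTree → LTree → LTree
deriving DecidableEq

namespace LTree

/-- The size: number of branching (degree-3) nodes. -/
def size : LTree → ℕ
  | leaf _ => 0
  | node l r => size l + size r + 1

/-- The list of labels of the (non-root) leaves, left to right. -/
def labs : LTree → List ℕ
  | leaf a => [a]
  | node l r => labs l ++ labs r

/-- `t` is a labeled binary tree of size `n`: it has `n` branching nodes and its
`n+1` non-root leaves are bijectively labeled by `{1,…,n+1}` (the root leaf gets 0). -/
def IsLab (n : ℕ) (t : LTree) : Prop :=
  size t = n ∧ List.Perm (labs t) ((List.range (n + 1)).map (· + 1))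

/-- Number of elements of `L` strictly smaller than `x`. -/
def rank (L : List ℕ) (x : ℕ) : ℕ := L.countP (fun y => decide (y < x))

/-- Best-of-three comparison at a branching node with children `l`, `r`:
`true` iff at least two of the three minimally-labeled leaves of the fringe set
lie in the left child `l`. -/
def goLeft (l r : LTree) : Bool :=
  decide (2 ≤ (labs l).countP (fun x => decide (rank (labs l ++ labs r) x < 3)))

/-- The branching node selected by the best-of-three procedure (returned as the
fringe subtree rooted at it). -/
def botSel : LTree → LTree
  | leaf a => leaf a
  | node (leaf a) (leaf b) => node (leaf a) (leaf b)
  | node l r => if goLeft l r then botSel l else botSel r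

/-- The number of moves performed by the best-of-three selection. -/
def botDepth : LTree → ℕ
  | leaf _ => 0
  | node (leaf _) (leaf _) => 0
  | node l r => (if goLeft l r then botDepth l else botDepth r) + 1

/-- The position (sequence of left/right moves, `false` = left) of the selected node. -/
def botPos : LTree → List Bool
  | leaf _ => []
  | node (leaf _) (leaf _) => []
  | node l r => if goLeft l r then false :: botPos l else true :: botPos r

/-- Cut at the selected node: the two sibling leaves above it are removed, the
node becomes a leaf carrying the smaller label; returns the cut tree together
with the erased (BoT) label, i.e. the larger of the two. -/
def botCut : LTree → LTree × ℕ
  | leaf a => (leaf a, 0)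
  | node (leaf a) (leaf b) => (leaf (min a b), max a b)
  | node l r =>
    if goLeft l r then (node (botCut l).1 r, (botCut l).2)
    else (node l (botCut r).1, (botCut r).2)

/-- Relabel increasingly after erasing label `j`. -/
def relabel (j : ℕ) : LTree → LTree
  | leaf a => leaf (if a < j then a else a - 1)
  | node l r => node (relabel j l) (relabel j r)

/-- The label of the Best-of-Three leaf. -/
def botLabel (t : LTree) : ℕ := (botCut t).2

/-- Best-of-three erasure, including the increasing relabeling. -/
def botErase (t : LTree) : LTree := relabel (botCut t).2 (botCut t).1

/-- Positions (in the original coordinates of `t`) of the branching nodes cut by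
`k` successive best-of-three erasures, in order of erasure. -/
def eraseList : ℕ → LTree → List (List Bool)
  | 0, _ => []
  | k + 1, t => botPos t :: eraseList k (botErase t)

/-- The fringe subtree at a position (`false` = left child, `true` = right child). -/
def subAt : LTree → List Bool → Option LTree
  | t, [] => some t
  | leaf _, _ :: _ => none
  | node l _, false :: p => subAt l p
  | node _ r, true :: p => subAt r p

/-- Shift labels `≥ j` up by one, freeing the label `j`. -/
def relabelUp (j : ℕ) : LTree → LTree
  | leaf a => leaf (if a < j then a else a + 1)
  | node l r => node (relabelUp j l) (relabelUp j r)

/-- Graft a new leaf labeled `j` to the left (`side = false`) or right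
(`side = true`) of the leaf labeled `w`. -/
def graft (w j : ℕ) (side : Bool) : LTree → LTree
  | leaf a =>
    if a = w then (if side then node (leaf a) (leaf j) else node (leaf j) (leaf a))
    else leaf a
  | node l r => node (graft w j side l) (graft w j side r)

/-- The binary tree obtained from the `ℓ`-span (the unary–binary subtree spanned by
the root and the leaves labeled `1,…,ℓ`) by contracting its degree-2 vertices. -/
def trim (ℓ : ℕ) : LTree → LTree
  | leaf a => leaf a
  | node l r =>
    if (labs l).all (fun x => decide (ℓ < x)) then trim ℓ r
    else if (labs r).all (fun x => decide (ℓ < x)) then trim ℓ l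
    else node (trim ℓ l) (trim ℓ r)

/-- Map a position in `trim ℓ t` back to the corresponding position in `t`. -/
def trimPos (ℓ : ℕ) : LTree → List Bool → List Bool
  | leaf _, p => p
  | node l r, p =>
    if (labs l).all (fun x => decide (ℓ < x)) then true :: trimPos ℓ r p
    else if (labs r).all (fun x => decide (ℓ < x)) then false :: trimPos ℓ l p
    else
      match p with
      | [] => []
      | true :: q => true :: trimPos ℓ r q
      | false :: q => false :: trimPos ℓ l q

end LTree

theorem List.Sublist.idxOf_getElem_lt_idxOf_getElem {α : Type*} [BEq α] [LawfulBEq α]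
    {l l' : List α} (h : l.Sublist l') (hl' : l'.Nodup) {i j : ℕ} (hij : i < j)
    (hj : j < l.length) : l'.idxOf l[i] < l'.idxOf l[j] := by
  obtain ⟨f, hf⟩ := List.sublist_iff_exists_fin_orderEmbedding_get_eq.mp h
  have hidx : ∀ k (hk : k < l.length), l'.idxOf l[k] = f ⟨k, hk⟩ := fun k hk => by
    have := hf ⟨k, hk⟩
    simp only [List.get_eq_getElem] at this
    rw [this]
    exact hl'.idxOf_getElem _ _
  rw [hidx i (hij.trans hj), hidx j hj]
  exact f.strictMono hij

namespace LTree

theorem length_labs (t : LTree) : (labs t).length = size t + 1 := by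
  induction t with
  | leaf a => rfl
  | node l r ihl ihr => simp only [labs, size, List.length_append, ihl, ihr]; omega

theorem size_relabel (j : ℕ) (t : LTree) : size (relabel j t) = size t := by
  induction t with
  | leaf a => rfl
  | node l r ihl ihr => simp only [relabel, size, ihl, ihr]

theorem labs_relabel (j : ℕ) (t : LTree) :
    labs (relabel j t) = (labs t).map (fun a => if a < j then a else a - 1) := by
  induction t with
  | leaf a => rfl
  | node l r ihl ihr => simp only [relabel, labs, ihl, ihr, List.map_append]

theorem relabel_eq_self {j : ℕ} {t : LTree} (h : ∀ a ∈ labs t, a < j) : relabel j t = t := by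
  induction t with
  | leaf a => simp [relabel, h a (by simp [labs])]
  | node l r ihl ihr =>
    simp only [labs, List.mem_append] at h
    rw [relabel, ihl fun a ha => h a (.inl ha), ihr fun a ha => h a (.inr ha)]

theorem subAt_relabel (j : ℕ) (t : LTree) (p : List Bool) :
    subAt (relabel j t) p = (subAt t p).map (relabel j) := by
  induction t generalizing p with
  | leaf a => cases p <;> rfl
  | node l r ihl ihr =>
    rcases p with _ | ⟨_ | _, q⟩
    · rfl
    · exact ihl q
    · exact ihr q

def IsBranchAt (t : LTree) (p : List Bool) : Prop := ∃ l r, subAt t p = some (node l r)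

@[simp]
theorem isBranchAt_node_nil (l r : LTree) : IsBranchAt (node l r) [] := ⟨l, r, rfl⟩

@[simp]
theorem isBranchAt_node_false {l r : LTree} {q : List Bool} :
    IsBranchAt (node l r) (false :: q) ↔ IsBranchAt l q := Iff.rfl

@[simp]
theorem isBranchAt_node_true {l r : LTree} {q : List Bool} :
    IsBranchAt (node l r) (true :: q) ↔ IsBranchAt r q := Iff.rfl

theorem not_isBranchAt_leaf (a : ℕ) (p : List Bool) : ¬ IsBranchAt (leaf a) p := by
  rintro ⟨l, r, h⟩
  cases p <;> simp [subAt] at h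

@[simp]
theorem isBranchAt_relabel {j : ℕ} {t : LTree} {p : List Bool} :
    IsBranchAt (relabel j t) p ↔ IsBranchAt t p := by
  simp only [IsBranchAt, subAt_relabel, Option.map_eq_some_iff]
  constructor
  · rintro ⟨l, r, (_ | ⟨l', r'⟩), hs, he⟩
    · simp [relabel] at he
    · exact ⟨l', r', hs⟩
  · rintro ⟨l, r, hs⟩
    exact ⟨_, _, _, hs, rfl⟩

theorem goLeft_leaf_left (a : ℕ) (r : LTree) : goLeft (leaf a) r = false := by
  have : (labs (leaf a)).countP (fun x => decide (rank (labs (leaf a) ++ labs r) x < 3)) ≤ 1 :=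
    List.countP_le_length
  simp only [goLeft, decide_eq_false_iff_not]
  omega

theorem rank_cons (m : ℕ) (L : List ℕ) (x : ℕ) :
    rank (m :: L) x = rank L x + if m < x then 1 else 0 := by
  simp [rank, List.countP_cons]

theorem min_le_countP_rank_lt (k : ℕ) (F : List ℕ) :
    min k F.length ≤ F.countP (fun x => rank F x < k) := by
  induction k generalizing F with
  | zero => simp
  | succ k ih =>
    rcases eq_or_ne F [] with rfl | hF
    · simp
    set m := F.min hF
    have hperm : F.Perm (m :: F.erase m) := List.perm_cons_erase (List.min_mem hF)
    have hrank : ∀ x, rank F x = rank (F.erase m) x + if m < x then 1 else 0 := fun x => by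
      rw [← rank_cons, rank, rank, hperm.countP_eq]
    have hm : rank F m = 0 := List.countP_eq_zero.mpr fun y hy => by
      simpa using List.min_le_of_mem hy
    have hlen : F.length = (F.erase m).length + 1 := by rw [hperm.length_eq, List.length_cons]
    have hmono : (F.erase m).countP (fun x => rank (F.erase m) x < k) ≤
        (F.erase m).countP (fun x => rank F x < k + 1) :=
      List.countP_mono_left fun x _ hx => by
        simp only [hrank x, decide_eq_true_eq] at hx ⊢
        split_ifs <;> omega
    rw [hperm.countP_eq, List.countP_cons, hm]
    have := ih (F.erase m)
    simp only [decide_eq_true_eq, Nat.zero_lt_succ, ite_true]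
    omega

theorem goLeft_node_leaf (l₁ l₂ : LTree) (b : ℕ) : goLeft (node l₁ l₂) (leaf b) = true := by
  set F := labs (node l₁ l₂) ++ labs (leaf b)
  have hlen : 3 ≤ F.length := by
    simp only [F, List.length_append, length_labs, size]; omega
  have hF : min 3 F.length ≤ (labs (node l₁ l₂)).countP (fun x => rank F x < 3) +
      (labs (leaf b)).countP (fun x => rank F x < 3) := by
    rw [← List.countP_append]; exact min_le_countP_rank_lt 3 F
  have hb : (labs (leaf b)).countP (fun x => rank F x < 3) ≤ 1 := List.countP_le_length
  show decide (2 ≤ (labs (node l₁ l₂)).countP (fun x => rank F x < 3)) = true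
  rw [decide_eq_true_eq]
  omega

@[elab_as_elim]
theorem botCut_induction {P : LTree → Prop}
    (cherry : ∀ a b, P (node (leaf a) (leaf b)))
    (left : ∀ l r, goLeft l r = true → 1 ≤ size l → P l → P (node l r))
    (right : ∀ l r, goLeft l r = false → 1 ≤ size r → P r → P (node l r))
    (t : LTree) (ht : 1 ≤ size t) : P t := by
  induction t with
  | leaf a => simp [size] at ht
  | node l r ihl ihr =>
    cases hg : goLeft l r
    · cases r with
      | leaf b =>
        cases l with
        | leaf a => exact cherry a b
        | node l₁ l₂ => simp [goLeft_node_leaf] at hg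
      | node r₁ r₂ => exact right _ _ hg (by simp [size]) (ihr (by simp [size]))
    · cases l with
      | leaf a => simp [goLeft_leaf_left] at hg
      | node l₁ l₂ => exact left _ _ hg (by simp [size]) (ihl (by simp [size]))

section botCut

variable {l r t : LTree}

theorem botCut_node_of_goLeft (hg : goLeft l r = true) :
    botCut (node l r) = (node (botCut l).1 r, botLabel l) := by
  cases l with
  | leaf a => simp [goLeft_leaf_left] at hg
  | node l₁ l₂ => cases r <;> simp [botCut, botLabel, hg]

theorem botPos_node_of_goLeft (hg : goLeft l r = true) :
    botPos (node l r) = false :: botPos l := by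
  cases l with
  | leaf a => simp [goLeft_leaf_left] at hg
  | node l₁ l₂ => cases r <;> simp [botPos, hg]

theorem botLabel_node_of_goLeft (hg : goLeft l r = true) : botLabel (node l r) = botLabel l := by
  rw [botLabel, botCut_node_of_goLeft hg]

theorem botCut_node_of_not_goLeft (hg : goLeft l r = false) (hr : 1 ≤ size r) :
    botCut (node l r) = (node l (botCut r).1, botLabel r) := by
  cases r with
  | leaf b => simp [size] at hr
  | node r₁ r₂ => cases l <;> simp [botCut, botLabel, hg]

theorem botPos_node_of_not_goLeft (hg : goLeft l r = false) (hr : 1 ≤ size r) :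
    botPos (node l r) = true :: botPos r := by
  cases r with
  | leaf b => simp [size] at hr
  | node r₁ r₂ => cases l <;> simp [botPos, hg]

theorem botLabel_node_of_not_goLeft (hg : goLeft l r = false) (hr : 1 ≤ size r) :
    botLabel (node l r) = botLabel r := by
  rw [botLabel, botCut_node_of_not_goLeft hg hr]

theorem perm_botLabel_cons_labs_botCut (ht : 1 ≤ size t) :
    (botLabel t :: labs (botCut t).1).Perm (labs t) := by
  refine botCut_induction (fun a b => ?_) (fun l r hg _ ih => ?_) (fun l r hg hr ih => ?_) t ht
  · simp only [botCut, botLabel, labs, List.singleton_append]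
    rcases le_total a b with h | h
    · rw [max_eq_right h, min_eq_left h]; exact .swap _ _ _
    · rw [max_eq_left h, min_eq_right h]
  · rw [botLabel, botCut_node_of_goLeft hg]
    exact ih.append_right (labs r)
  · rw [botLabel, botCut_node_of_not_goLeft hg hr]
    exact List.perm_middle.symm.trans (ih.append_left (labs l))

theorem botLabel_mem_labs (ht : 1 ≤ size t) : botLabel t ∈ labs t :=
  (perm_botLabel_cons_labs_botCut ht).subset List.mem_cons_self

theorem size_botCut (ht : 1 ≤ size t) : size (botCut t).1 + 1 = size t := by
  have := (perm_botLabel_cons_labs_botCut ht).length_eq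
  simp only [List.length_cons, length_labs] at this
  omega

theorem botErase_eq (t : LTree) : botErase t = relabel (botLabel t) (botCut t).1 := rfl

theorem size_botErase (ht : 1 ≤ size t) : size (botErase t) + 1 = size t := by
  rw [botErase_eq, size_relabel, size_botCut ht]

theorem exists_mem_labs_botCut_le (ht : 1 ≤ size t) :
    ∃ c ∈ labs (botCut t).1, c ≤ botLabel t := by
  refine botCut_induction (fun a b => ?_) (fun l r hg _ ih => ?_) (fun l r hg hr ih => ?_) t ht
  · exact ⟨min a b, by simp [botCut, labs], min_le_max⟩
  · obtain ⟨c, hc, hcj⟩ := ih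
    rw [botLabel, botCut_node_of_goLeft hg]
    exact ⟨c, List.mem_append_left _ hc, hcj⟩
  · obtain ⟨c, hc, hcj⟩ := ih
    rw [botLabel, botCut_node_of_not_goLeft hg hr]
    exact ⟨c, List.mem_append_right _ hc, hcj⟩

theorem isBranchAt_botPos (ht : 1 ≤ size t) : IsBranchAt t (botPos t) := by
  refine botCut_induction (fun a b => ?_) (fun l r hg _ ih => ?_) (fun l r hg hr ih => ?_) t ht
  · exact isBranchAt_node_nil _ _
  · rwa [botPos_node_of_goLeft hg, isBranchAt_node_false]
  · rwa [botPos_node_of_not_goLeft hg hr, isBranchAt_node_true]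

theorem not_isBranchAt_botCut_botPos (ht : 1 ≤ size t) :
    ¬ IsBranchAt (botCut t).1 (botPos t) := by
  refine botCut_induction (fun a b => ?_) (fun l r hg _ ih => ?_) (fun l r hg hr ih => ?_) t ht
  · exact not_isBranchAt_leaf _ _
  · rwa [botPos_node_of_goLeft hg, botCut_node_of_goLeft hg, isBranchAt_node_false]
  · rwa [botPos_node_of_not_goLeft hg hr, botCut_node_of_not_goLeft hg hr, isBranchAt_node_true]

theorem IsBranchAt.of_botCut (ht : 1 ≤ size t) {q : List Bool} (hq : IsBranchAt (botCut t).1 q) :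
    IsBranchAt t q := by
  refine botCut_induction (P := fun t => ∀ q, IsBranchAt (botCut t).1 q → IsBranchAt t q)
    (fun a b q hq => ?_) (fun l r hg _ ih q hq => ?_) (fun l r hg hr ih q hq => ?_) t ht q hq
  · exact absurd hq (not_isBranchAt_leaf _ _)
  · rw [botCut_node_of_goLeft hg] at hq
    rcases q with _ | ⟨_ | _, q⟩
    · exact isBranchAt_node_nil _ _
    · exact ih q hq
    · exact hq
  · rw [botCut_node_of_not_goLeft hg hr] at hq
    rcases q with _ | ⟨_ | _, q⟩
    · exact isBranchAt_node_nil _ _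
    · exact hq
    · exact ih q hq

theorem botLabel_not_mem_labs_botCut (ht : 1 ≤ size t) (hnd : (labs t).Nodup) :
    botLabel t ∉ labs (botCut t).1 :=
  (List.nodup_cons.mp ((perm_botLabel_cons_labs_botCut ht).nodup_iff.mpr hnd)).1

theorem nodup_labs_botErase (ht : 1 ≤ size t) (hnd : (labs t).Nodup) :
    (labs (botErase t)).Nodup := by
  obtain ⟨hj, hcut⟩ := List.nodup_cons.mp ((perm_botLabel_cons_labs_botCut ht).nodup_iff.mpr hnd)
  rw [botErase_eq, labs_relabel]
  refine hcut.map_on fun x hx y hy hxy => ?_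
  have := ne_of_mem_of_not_mem hx hj
  have := ne_of_mem_of_not_mem hy hj
  split_ifs at hxy <;> omega

theorem botLabel_pos (ht : 1 ≤ size t) (hnd : (labs t).Nodup) : 0 < botLabel t := by
  obtain ⟨c, hc, hcj⟩ := exists_mem_labs_botCut_le ht
  have := ne_of_mem_of_not_mem hc (botLabel_not_mem_labs_botCut ht hnd)
  omega

end botCut

theorem eraseList_succ (k : ℕ) (t : LTree) :
    eraseList (k + 1) t = botPos t :: eraseList k (botErase t) := rfl

theorem length_eraseList (k : ℕ) (t : LTree) : (eraseList k t).length = k := by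
  induction k generalizing t with
  | zero => rfl
  | succ k ih => simp [eraseList, ih]

theorem isBranchAt_of_mem_eraseList {k : ℕ} {t : LTree} (hk : k ≤ size t) {q : List Bool}
    (hq : q ∈ eraseList k t) : IsBranchAt t q := by
  induction k generalizing t with
  | zero => simp [eraseList] at hq
  | succ k ih =>
    have ht : 1 ≤ size t := by omega
    rcases List.mem_cons.mp hq with rfl | hq
    · exact isBranchAt_botPos ht
    · have hk' : k ≤ size (botErase t) := by have := size_botErase ht; omega
      exact (isBranchAt_relabel.mp (ih hk' hq)).of_botCut ht

theorem nodup_eraseList {k : ℕ} {t : LTree} (hk : k ≤ size t) : (eraseList k t).Nodup := by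
  induction k generalizing t with
  | zero => exact List.nodup_nil
  | succ k ih =>
    have ht : 1 ≤ size t := by omega
    have hk' : k ≤ size (botErase t) := by have := size_botErase ht; omega
    refine List.nodup_cons.mpr ⟨fun hmem => ?_, ih hk'⟩
    exact not_isBranchAt_botCut_botPos ht
      (isBranchAt_relabel.mp (isBranchAt_of_mem_eraseList hk' hmem))

/-- The subtree `t` does not meet the `ℓ`-span. -/
abbrev offSpan (ℓ : ℕ) (t : LTree) : Bool := (labs t).all (fun x => decide (ℓ < x))

section trim

variable {ℓ : ℕ} {l r t : LTree}

theorem offSpan_eq_false_iff : offSpan ℓ t = false ↔ ∃ x ∈ labs t, x ≤ ℓ := by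
  simp [offSpan]

theorem countP_pos_of_offSpan_eq_false (h : offSpan ℓ t = false) :
    0 < (labs t).countP (· ≤ ℓ) :=
  List.countP_pos_iff.mpr (by simpa using offSpan_eq_false_iff.mp h)

@[simp]
theorem offSpan_leaf (a : ℕ) : offSpan ℓ (leaf a) = decide (ℓ < a) := by
  simp [offSpan, labs]

@[simp]
theorem offSpan_node : offSpan ℓ (node l r) = (offSpan ℓ l && offSpan ℓ r) := by
  simp [offSpan, labs]

theorem trim_node_of_offSpan_left (hl : offSpan ℓ l = true) : trim ℓ (node l r) = trim ℓ r := by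
  simp only [trim, hl, if_true]

theorem trim_node_of_offSpan_right (hl : offSpan ℓ l = false) (hr : offSpan ℓ r = true) :
    trim ℓ (node l r) = trim ℓ l := by
  simp only [trim, hl, hr, Bool.false_eq_true, if_false, if_true]

theorem trim_node (hl : offSpan ℓ l = false) (hr : offSpan ℓ r = false) :
    trim ℓ (node l r) = node (trim ℓ l) (trim ℓ r) := by
  simp only [trim, hl, hr, Bool.false_eq_true, if_false]

theorem trimPos_node_of_offSpan_left (hl : offSpan ℓ l = true) (p : List Bool) :
    trimPos ℓ (node l r) p = true :: trimPos ℓ r p := by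
  simp only [trimPos, hl, if_true]

theorem trimPos_node_of_offSpan_right (hl : offSpan ℓ l = false) (hr : offSpan ℓ r = true)
    (p : List Bool) : trimPos ℓ (node l r) p = false :: trimPos ℓ l p := by
  simp only [trimPos, hl, hr, Bool.false_eq_true, if_false, if_true]

theorem trimPos_node_nil (hl : offSpan ℓ l = false) (hr : offSpan ℓ r = false) :
    trimPos ℓ (node l r) [] = [] := by
  simp only [trimPos, hl, hr, Bool.false_eq_true, if_false]

theorem trimPos_node_false (hl : offSpan ℓ l = false) (hr : offSpan ℓ r = false)
    (q : List Bool) : trimPos ℓ (node l r) (false :: q) = false :: trimPos ℓ l q := by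
  simp only [trimPos, hl, hr, Bool.false_eq_true, if_false]

theorem trimPos_node_true (hl : offSpan ℓ l = false) (hr : offSpan ℓ r = false)
    (q : List Bool) : trimPos ℓ (node l r) (true :: q) = true :: trimPos ℓ r q := by
  simp only [trimPos, hl, hr, Bool.false_eq_true, if_false]

theorem labs_trim (h : offSpan ℓ t = false) : labs (trim ℓ t) = (labs t).filter (· ≤ ℓ) := by
  induction t with
  | leaf a => simp_all [offSpan, trim, labs]
  | node l r ihl ihr =>
    have hfilter : ∀ s, offSpan ℓ s = true → (labs s).filter (· ≤ ℓ) = [] := fun s hs => by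
      simp_all [offSpan]
    rw [labs, List.filter_append]
    cases hl : offSpan ℓ l
    · cases hr : offSpan ℓ r
      · rw [trim_node hl hr, labs, ihl hl, ihr hr]
      · rw [trim_node_of_offSpan_right hl hr, ihl hl, hfilter r hr, List.append_nil]
    · have hr : offSpan ℓ r = false := by simpa [hl] using h
      rw [trim_node_of_offSpan_left hl, ihr hr, hfilter l hl, List.nil_append]

theorem size_trim (h : offSpan ℓ t = false) :
    size (trim ℓ t) + 1 = (labs t).countP (· ≤ ℓ) := by
  rw [← length_labs, labs_trim h, List.countP_eq_length_filter]

theorem size_trim_of_offSpan (h : offSpan ℓ t = true) : size (trim ℓ t) = 0 := by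
  induction t with
  | leaf a => rfl
  | node l r _ ihr =>
    simp only [offSpan_node, Bool.and_eq_true] at h
    rw [trim_node_of_offSpan_left h.1, ihr h.2]

theorem size_trim_le : size (trim ℓ t) ≤ size t := by
  induction t with
  | leaf a => rfl
  | node l r ihl ihr =>
    simp only [trim]
    split_ifs <;> simp only [size] <;> omega

theorem rank_filter_le {F : List ℕ} {x : ℕ} (hx : x ≤ ℓ) :
    rank (F.filter (· ≤ ℓ)) x = rank F x := by
  rw [rank, rank, List.countP_filter]
  refine List.countP_congr fun y _ => ?_
  simp only [Bool.and_eq_true, decide_eq_true_eq]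
  omega

/-- Once three labels are `≤ ℓ`, no label above `ℓ` ranks among the three smallest. -/
theorem goLeft_trim (hl : offSpan ℓ l = false) (hr : offSpan ℓ r = false)
    (h3 : 3 ≤ (labs l ++ labs r).countP (· ≤ ℓ)) :
    goLeft (trim ℓ l) (trim ℓ r) = goLeft l r := by
  have hlr : labs (trim ℓ l) ++ labs (trim ℓ r) = (labs l ++ labs r).filter (· ≤ ℓ) := by
    rw [labs_trim hl, labs_trim hr, List.filter_append]
  unfold goLeft
  rw [hlr, labs_trim hl, List.countP_filter]
  congr 2
  refine List.countP_congr fun y _ => ?_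
  by_cases hy : y ≤ ℓ
  · simp only [hy, decide_true, Bool.and_true]
    rw [rank_filter_le hy]
  · have : (labs l ++ labs r).countP (· ≤ ℓ) ≤ rank (labs l ++ labs r) y :=
      List.countP_mono_left fun x _ hx => by simp only [decide_eq_true_eq] at hx ⊢; omega
    simp only [hy, decide_false, Bool.and_false, Bool.false_eq_true, false_iff, not_lt,
      decide_eq_true_eq]
    omega

theorem offSpan_botCut (ht : 1 ≤ size t) : offSpan ℓ (botCut t).1 = offSpan ℓ t := by
  have hperm := perm_botLabel_cons_labs_botCut ht
  obtain ⟨c, hc, hcj⟩ := exists_mem_labs_botCut_le ht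
  rw [offSpan, offSpan, ← hperm.all_eq, List.all_cons]
  by_cases hj : ℓ < botLabel t
  · simp [hj]
  · have : (labs (botCut t).1).all (fun x => decide (ℓ < x)) = false :=
      List.all_eq_false.mpr ⟨c, hc, by simp only [decide_eq_true_eq]; omega⟩
    simp [hj, this]

end trim

section relabel

variable {ℓ ℓ' j : ℕ} {t : LTree}

theorem offSpan_relabel (h : ∀ a ∈ labs t, ℓ' < (if a < j then a else a - 1) ↔ ℓ < a) :
    offSpan ℓ' (relabel j t) = offSpan ℓ t := by
  rw [offSpan, offSpan, labs_relabel, List.all_map, Bool.eq_iff_iff]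
  simp only [List.all_eq_true, Function.comp_apply, decide_eq_true_eq]
  exact forall₂_congr h

theorem trim_relabel (h : ∀ a ∈ labs t, ℓ' < (if a < j then a else a - 1) ↔ ℓ < a) :
    trim ℓ' (relabel j t) = relabel j (trim ℓ t) := by
  induction t with
  | leaf a => rfl
  | node l r ihl ihr =>
    simp only [labs, List.mem_append] at h
    have hl := offSpan_relabel fun a ha => h a (.inl ha)
    have hr := offSpan_relabel fun a ha => h a (.inr ha)
    simp only [relabel, trim, hl, hr, ihl fun a ha => h a (.inl ha), ihr fun a ha => h a (.inr ha)]
    split_ifs <;> rfl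

theorem trimPos_relabel (h : ∀ a ∈ labs t, ℓ' < (if a < j then a else a - 1) ↔ ℓ < a) :
    trimPos ℓ' (relabel j t) = trimPos ℓ t := by
  induction t with
  | leaf a => rfl
  | node l r ihl ihr =>
    simp only [labs, List.mem_append] at h
    have hl := offSpan_relabel fun a ha => h a (.inl ha)
    have hr := offSpan_relabel fun a ha => h a (.inr ha)
    funext p
    simp only [relabel, trimPos, hl, hr, ihl fun a ha => h a (.inl ha),
      ihr fun a ha => h a (.inr ha)]

end relabel

section cut

variable {ℓ : ℕ} {l r t : LTree}

theorem offSpan_eq_false_of_botLabel_le (ht : 1 ≤ size t) (hj : botLabel t ≤ ℓ) :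
    offSpan ℓ t = false :=
  offSpan_eq_false_iff.mpr ⟨_, botLabel_mem_labs ht, hj⟩

theorem two_le_countP_of_botLabel_le (ht : 1 ≤ size t) (hj : botLabel t ≤ ℓ) :
    2 ≤ (labs t).countP (· ≤ ℓ) := by
  obtain ⟨c, hc, hcj⟩ := exists_mem_labs_botCut_le ht
  have hpos : 0 < (labs (botCut t).1).countP (· ≤ ℓ) :=
    List.countP_pos_iff.mpr ⟨c, hc, by simp only [decide_eq_true_eq]; omega⟩
  rw [← (perm_botLabel_cons_labs_botCut ht).countP_eq, List.countP_cons]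
  simp only [hj, decide_true, if_true]
  omega

theorem one_le_size_trim_of_botLabel_le (ht : 1 ≤ size t) (hj : botLabel t ≤ ℓ) :
    1 ≤ size (trim ℓ t) := by
  have := size_trim (offSpan_eq_false_of_botLabel_le ht hj)
  have := two_le_countP_of_botLabel_le ht hj
  omega

/-- The `ℓ`-span erases the same cherry as `t`, with the same label, at the corresponding
position. -/
def SpanMirrorsCut (ℓ : ℕ) (t : LTree) : Prop :=
  botCut (trim ℓ t) = (trim ℓ (botCut t).1, botLabel t) ∧
    trimPos ℓ t (botPos (trim ℓ t)) = botPos t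

theorem spanMirrorsCut_cherry {a b : ℕ} (hab : max a b ≤ ℓ) :
    SpanMirrorsCut ℓ (node (leaf a) (leaf b)) := by
  have ha : offSpan ℓ (leaf a) = false := by simpa using le_of_max_le_left hab
  have hb : offSpan ℓ (leaf b) = false := by simpa using le_of_max_le_right hab
  have htrim : trim ℓ (node (leaf a) (leaf b)) = node (leaf a) (leaf b) := trim_node ha hb
  rw [SpanMirrorsCut, htrim]
  exact ⟨rfl, trimPos_node_nil ha hb⟩

theorem spanMirrorsCut_node_of_goLeft (hg : goLeft l r = true) (hl : 1 ≤ size l)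
    (hj : botLabel l ≤ ℓ) (ih : SpanMirrorsCut ℓ l) : SpanMirrorsCut ℓ (node l r) := by
  obtain ⟨e₁, e₂⟩ := ih
  rw [SpanMirrorsCut, botLabel_node_of_goLeft hg, botCut_node_of_goLeft hg,
    botPos_node_of_goLeft hg]
  have hl₀ := offSpan_eq_false_of_botLabel_le hl hj
  have hl₁ : offSpan ℓ (botCut l).1 = false := (offSpan_botCut hl).trans hl₀
  cases hr₀ : offSpan ℓ r
  · have h3 : 3 ≤ (labs l ++ labs r).countP (· ≤ ℓ) := by
      have := two_le_countP_of_botLabel_le hl hj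
      have := countP_pos_of_offSpan_eq_false hr₀
      rw [List.countP_append]; omega
    have hg' : goLeft (trim ℓ l) (trim ℓ r) = true := (goLeft_trim hl₀ hr₀ h3).trans hg
    rw [trim_node hl₀ hr₀, trim_node hl₁ hr₀, botCut_node_of_goLeft hg', botLabel, e₁,
      botPos_node_of_goLeft hg', trimPos_node_false hl₀ hr₀, e₂]
    exact ⟨rfl, rfl⟩
  · rw [trim_node_of_offSpan_right hl₀ hr₀, trim_node_of_offSpan_right hl₁ hr₀,
      trimPos_node_of_offSpan_right hl₀ hr₀, e₁, e₂]
    exact ⟨rfl, rfl⟩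

theorem spanMirrorsCut_node_of_not_goLeft (hg : goLeft l r = false) (hr : 1 ≤ size r)
    (hj : botLabel r ≤ ℓ) (ih : SpanMirrorsCut ℓ r) : SpanMirrorsCut ℓ (node l r) := by
  obtain ⟨e₁, e₂⟩ := ih
  rw [SpanMirrorsCut, botLabel_node_of_not_goLeft hg hr, botCut_node_of_not_goLeft hg hr,
    botPos_node_of_not_goLeft hg hr]
  have hr₀ := offSpan_eq_false_of_botLabel_le hr hj
  have hr₁ : offSpan ℓ (botCut r).1 = false := (offSpan_botCut hr).trans hr₀
  cases hl₀ : offSpan ℓ l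
  · have h3 : 3 ≤ (labs l ++ labs r).countP (· ≤ ℓ) := by
      have := two_le_countP_of_botLabel_le hr hj
      have := countP_pos_of_offSpan_eq_false hl₀
      rw [List.countP_append]; omega
    have hg' : goLeft (trim ℓ l) (trim ℓ r) = false := (goLeft_trim hl₀ hr₀ h3).trans hg
    have hsz := one_le_size_trim_of_botLabel_le hr hj
    rw [trim_node hl₀ hr₀, trim_node hl₀ hr₁, botCut_node_of_not_goLeft hg' hsz, botLabel, e₁,
      botPos_node_of_not_goLeft hg' hsz, trimPos_node_true hl₀ hr₀, e₂]
    exact ⟨rfl, rfl⟩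
  · rw [trim_node_of_offSpan_left hl₀, trim_node_of_offSpan_left hl₀,
      trimPos_node_of_offSpan_left hl₀, e₁, e₂]
    exact ⟨rfl, rfl⟩

theorem spanMirrorsCut_of_botLabel_le (ht : 1 ≤ size t) (hj : botLabel t ≤ ℓ) :
    SpanMirrorsCut ℓ t := by
  refine botCut_induction (P := fun t => botLabel t ≤ ℓ → SpanMirrorsCut ℓ t)
    (fun a b hj => spanMirrorsCut_cherry hj) (fun l r hg hl ih hj => ?_)
    (fun l r hg hr ih hj => ?_) t ht hj
  · rw [botLabel_node_of_goLeft hg] at hj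
    exact spanMirrorsCut_node_of_goLeft hg hl hj (ih hj)
  · rw [botLabel_node_of_not_goLeft hg hr] at hj
    exact spanMirrorsCut_node_of_not_goLeft hg hr hj (ih hj)

theorem trim_botCut_of_lt_botLabel (ht : 1 ≤ size t) (hj : ℓ < botLabel t)
    (hc : offSpan ℓ t = false) : trim ℓ (botCut t).1 = trim ℓ t := by
  refine botCut_induction (P := fun t => ℓ < botLabel t → offSpan ℓ t = false →
      trim ℓ (botCut t).1 = trim ℓ t)
    (fun a b hj hc => ?_) (fun l r hg hl ih hj hc => ?_) (fun l r hg hr ih hj hc => ?_) t ht hj hc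
  · have hab : ℓ < max a b := hj
    simp only [offSpan_node, offSpan_leaf, Bool.and_eq_false_iff, decide_eq_false_iff_not] at hc
    have hcut : (botCut (node (leaf a) (leaf b))).1 = leaf (min a b) := rfl
    rcases le_or_gt a ℓ with ha | ha
    · rw [hcut, trim_node_of_offSpan_right (by simpa using ha) (by simp; omega),
        min_eq_left (by omega)]
    · rw [hcut, trim_node_of_offSpan_left (by simpa using ha), min_eq_right (by omega)]
  · rw [botLabel_node_of_goLeft hg] at hj
    rw [botCut_node_of_goLeft hg]
    have ho := offSpan_botCut (ℓ := ℓ) hl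
    cases hl₀ : offSpan ℓ l
    · cases hr₀ : offSpan ℓ r
      · rw [trim_node (ho.trans hl₀) hr₀, trim_node hl₀ hr₀, ih hj hl₀]
      · rw [trim_node_of_offSpan_right (ho.trans hl₀) hr₀, trim_node_of_offSpan_right hl₀ hr₀,
          ih hj hl₀]
    · rw [trim_node_of_offSpan_left (ho.trans hl₀), trim_node_of_offSpan_left hl₀]
  · rw [botLabel_node_of_not_goLeft hg hr] at hj
    rw [botCut_node_of_not_goLeft hg hr]
    have ho := offSpan_botCut (ℓ := ℓ) hr
    cases hl₀ : offSpan ℓ l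
    · cases hr₀ : offSpan ℓ r
      · rw [trim_node hl₀ (ho.trans hr₀), trim_node hl₀ hr₀, ih hj hr₀]
      · rw [trim_node_of_offSpan_right hl₀ (ho.trans hr₀), trim_node_of_offSpan_right hl₀ hr₀]
    · have hr₀ : offSpan ℓ r = false := by simpa [hl₀] using hc
      rw [trim_node_of_offSpan_left hl₀, trim_node_of_offSpan_left hl₀, ih hj hr₀]

theorem trimPos_botCut (ht : 1 ≤ size t) {p : List Bool}
    (hp : IsBranchAt (trim ℓ (botCut t).1) p) : trimPos ℓ (botCut t).1 p = trimPos ℓ t p := by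
  refine botCut_induction (P := fun t => ∀ p, IsBranchAt (trim ℓ (botCut t).1) p →
      trimPos ℓ (botCut t).1 p = trimPos ℓ t p)
    (fun a b p hp => ?_) (fun l r hg hl ih p hp => ?_) (fun l r hg hr ih p hp => ?_) t ht p hp
  · exact absurd hp (not_isBranchAt_leaf _ _)
  · rw [botCut_node_of_goLeft hg] at hp ⊢
    have ho := offSpan_botCut (ℓ := ℓ) hl
    cases hl₀ : offSpan ℓ l
    · cases hr₀ : offSpan ℓ r
      · rw [trim_node (ho.trans hl₀) hr₀] at hp
        rcases p with _ | ⟨_ | _, q⟩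
        · rw [trimPos_node_nil (ho.trans hl₀) hr₀, trimPos_node_nil hl₀ hr₀]
        · rw [trimPos_node_false (ho.trans hl₀) hr₀, trimPos_node_false hl₀ hr₀, ih q hp]
        · rw [trimPos_node_true (ho.trans hl₀) hr₀, trimPos_node_true hl₀ hr₀]
      · rw [trim_node_of_offSpan_right (ho.trans hl₀) hr₀] at hp
        rw [trimPos_node_of_offSpan_right (ho.trans hl₀) hr₀,
          trimPos_node_of_offSpan_right hl₀ hr₀, ih p hp]
    · rw [trimPos_node_of_offSpan_left (ho.trans hl₀), trimPos_node_of_offSpan_left hl₀]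
  · rw [botCut_node_of_not_goLeft hg hr] at hp ⊢
    have ho := offSpan_botCut (ℓ := ℓ) hr
    cases hl₀ : offSpan ℓ l
    · cases hr₀ : offSpan ℓ r
      · rw [trim_node hl₀ (ho.trans hr₀)] at hp
        rcases p with _ | ⟨_ | _, q⟩
        · rw [trimPos_node_nil hl₀ (ho.trans hr₀), trimPos_node_nil hl₀ hr₀]
        · rw [trimPos_node_false hl₀ (ho.trans hr₀), trimPos_node_false hl₀ hr₀]
        · rw [trimPos_node_true hl₀ (ho.trans hr₀), trimPos_node_true hl₀ hr₀, ih q hp]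
      · rw [trimPos_node_of_offSpan_right hl₀ (ho.trans hr₀),
          trimPos_node_of_offSpan_right hl₀ hr₀]
    · rw [trim_node_of_offSpan_left hl₀] at hp
      rw [trimPos_node_of_offSpan_left hl₀, trimPos_node_of_offSpan_left hl₀, ih p hp]

end cut

theorem lt_relabel_iff_of_ne {ℓ j a : ℕ} (hj : ℓ < j) (ha : a ≠ j) :
    ℓ < (if a < j then a else a - 1) ↔ ℓ < a := by
  split_ifs <;> omega

theorem pred_lt_relabel_iff {ℓ j a : ℕ} (hj₀ : 0 < j) (hj : j ≤ ℓ) :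
    ℓ - 1 < (if a < j then a else a - 1) ↔ ℓ < a := by
  split_ifs <;> omega

section erase

variable {ℓ : ℕ} {t : LTree}

theorem trim_pred_botErase (ht : 1 ≤ size t) (hnd : (labs t).Nodup) (hj : botLabel t ≤ ℓ) :
    trim (ℓ - 1) (botErase t) = relabel (botLabel t) (trim ℓ (botCut t).1) :=
  trim_relabel fun _ _ => pred_lt_relabel_iff (botLabel_pos ht hnd) hj

theorem trimPos_pred_botErase (ht : 1 ≤ size t) (hnd : (labs t).Nodup) (hj : botLabel t ≤ ℓ) :
    trimPos (ℓ - 1) (botErase t) = trimPos ℓ (botCut t).1 :=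
  trimPos_relabel fun _ _ => pred_lt_relabel_iff (botLabel_pos ht hnd) hj

theorem trim_botErase_of_lt_botLabel (ht : 1 ≤ size t) (hnd : (labs t).Nodup)
    (hj : ℓ < botLabel t) : trim ℓ (botErase t) = relabel (botLabel t) (trim ℓ (botCut t).1) :=
  trim_relabel fun _ ha => lt_relabel_iff_of_ne hj
    (ne_of_mem_of_not_mem ha (botLabel_not_mem_labs_botCut ht hnd))

theorem trimPos_botErase_of_lt_botLabel (ht : 1 ≤ size t) (hnd : (labs t).Nodup)
    (hj : ℓ < botLabel t) : trimPos ℓ (botErase t) = trimPos ℓ (botCut t).1 :=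
  trimPos_relabel fun _ ha => lt_relabel_iff_of_ne hj
    (ne_of_mem_of_not_mem ha (botLabel_not_mem_labs_botCut ht hnd))

theorem botErase_trim_of_botLabel_le (ht : 1 ≤ size t) (hnd : (labs t).Nodup)
    (hj : botLabel t ≤ ℓ) : botErase (trim ℓ t) = trim (ℓ - 1) (botErase t) := by
  rw [trim_pred_botErase ht hnd hj, botErase, (spanMirrorsCut_of_botLabel_le ht hj).1]

theorem trim_botErase_eq_trim (ht : 1 ≤ size t) (hnd : (labs t).Nodup) (hj : ℓ < botLabel t)
    (hc : offSpan ℓ t = false) : trim ℓ (botErase t) = trim ℓ t := by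
  rw [trim_botErase_of_lt_botLabel ht hnd hj, trim_botCut_of_lt_botLabel ht hj hc]
  refine relabel_eq_self fun a ha => ?_
  rw [labs_trim hc, List.mem_filter, decide_eq_true_eq] at ha
  omega

theorem map_trimPos_eraseList_trim_sublist (ℓ : ℕ) {t : LTree} (hnd : (labs t).Nodup) :
    ((eraseList (size (trim ℓ t)) (trim ℓ t)).map (trimPos ℓ t)).Sublist
      (eraseList (size t) t) := by
  induction hn : size t generalizing t ℓ with
  | zero =>
    have : size (trim ℓ t) ≤ 0 := hn ▸ size_trim_le
    rw [Nat.eq_zero_of_le_zero this]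
    exact List.nil_sublist _
  | succ m ih =>
    have ht : 1 ≤ size t := by omega
    have hm : size (botErase t) = m := by have := size_botErase ht; omega
    have hnd' := nodup_labs_botErase ht hnd
    cases hc : offSpan ℓ t
    case true =>
      rw [size_trim_of_offSpan hc]
      exact List.nil_sublist _
    rw [eraseList_succ]
    by_cases hj : botLabel t ≤ ℓ
    · have hE := botErase_trim_of_botLabel_le ht hnd hj
      obtain ⟨k, hk⟩ := Nat.exists_eq_add_one.mpr (one_le_size_trim_of_botLabel_le ht hj)
      have hk' : size (trim (ℓ - 1) (botErase t)) = k := by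
        have := size_botErase (t := trim ℓ t) (by omega)
        rw [hE] at this; omega
      rw [hk, eraseList_succ, List.map_cons, (spanMirrorsCut_of_botLabel_le ht hj).2, hE]
      refine .cons_cons _ ?_
      convert ih (ℓ - 1) hnd' hm using 1
      rw [hk']
      refine List.map_congr_left fun q hq => ?_
      have hq := isBranchAt_of_mem_eraseList hk'.ge hq
      rw [trim_pred_botErase ht hnd hj, isBranchAt_relabel] at hq
      rw [trimPos_pred_botErase ht hnd hj, trimPos_botCut ht hq]
    · have hj : ℓ < botLabel t := not_le.mp hj
      have hE := trim_botErase_eq_trim ht hnd hj hc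
      refine .cons _ ?_
      convert ih ℓ hnd' hm using 1
      rw [hE]
      refine List.map_congr_left fun q hq => ?_
      have hq := isBranchAt_of_mem_eraseList le_rfl hq
      rw [← trim_botCut_of_lt_botLabel ht hj hc] at hq
      rw [trimPos_botErase_of_lt_botLabel ht hnd hj, trimPos_botCut ht hq]

end erase

namespace IsLab

variable {n ℓ : ℕ} {t : LTree}

theorem nodup_labs (h : IsLab n t) : (labs t).Nodup :=
  h.2.nodup_iff.mpr (List.nodup_range.map fun _ _ => Nat.succ_inj.mp)

theorem size_trim (h : IsLab n t) (hℓ : 1 ≤ ℓ) (hℓn : ℓ ≤ n + 1) : size (trim ℓ t) = ℓ - 1 := by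
  have hc : offSpan ℓ t = false :=
    offSpan_eq_false_iff.mpr ⟨1, h.2.mem_iff.mpr (List.mem_map.mpr ⟨0, by simp, rfl⟩), hℓ⟩
  have hcount : (labs t).countP (· ≤ ℓ) = ℓ := by
    rw [h.2.countP_eq, List.countP_map, show n + 1 = ℓ + (n + 1 - ℓ) by omega, List.range_add,
      List.countP_append, List.countP_eq_length.mpr, List.countP_eq_zero.mpr, List.length_range,
      Nat.add_zero]
    · simp
    · simp only [List.mem_range, Function.comp_apply, decide_eq_true_eq]
      omega
  have := LTree.size_trim hc
  omega

end IsLab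

end LTree

theorem span_erasure_order_compatible_general (n ℓ : ℕ) (t : LTree) (h : LTree.IsLab n t)
    (hℓn : ℓ ≤ n) :
    ∀ i : ℕ, i + 1 < ℓ - 1 →
      (LTree.eraseList n t).idxOf
          (((LTree.eraseList (ℓ - 1) (LTree.trim ℓ t)).map (LTree.trimPos ℓ t)).getD i []) <
        (LTree.eraseList n t).idxOf
          (((LTree.eraseList (ℓ - 1) (LTree.trim ℓ t)).map (LTree.trimPos ℓ t)).getD (i + 1) []) := by
  intro i hi
  have hsub := LTree.map_trimPos_eraseList_trim_sublist ℓ h.nodup_labs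
  rw [h.size_trim (by omega) (by omega), h.1] at hsub
  have hlen : ((LTree.eraseList (ℓ - 1) (LTree.trim ℓ t)).map (LTree.trimPos ℓ t)).length
      = ℓ - 1 := by rw [List.length_map, LTree.length_eraseList]
  rw [List.getD_eq_getElem _ _ (by omega), List.getD_eq_getElem _ _ (by omega)]
  exact hsub.idxOf_getElem_lt_idxOf_getElem (LTree.nodup_eraseList h.1.ge) i.lt_succ_self
    (by omega)

/-- **Compatibility.** Let `t` be a labeled binary tree of size `n`
and, for `2 ≤ ℓ ≤ n`, let `trim ℓ t` be the (contracted) subtree spanned by the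
leaves labeled `0,…,ℓ`. List the branching nodes of the span in their order of
removal under iterated best-of-three erasure of the span, as positions in `t`
(via `trimPos`); and list all branching nodes of `t` in their removal order under
iterated best-of-three erasure of `t` (`eraseList n t`). Then the former order is
compatible with the latter: consecutive span branch points `b_i^ℓ ≺ b_{i+1}^ℓ`
are also ordered by `≺_t`. -/
theorem span_erasure_order_compatible (n ℓ : ℕ) (t : LTree) (h : LTree.IsLab n t)
    (hℓ : 2 ≤ ℓ) (hℓn : ℓ ≤ n) :
    ∀ i : ℕ, i + 1 < ℓ - 1 →
      (LTree.eraseList n t).idxOf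
          (((LTree.eraseList (ℓ - 1) (LTree.trim ℓ t)).map (LTree.trimPos ℓ t)).getD i []) <
        (LTree.eraseList n t).idxOf
          (((LTree.eraseList (ℓ - 1) (LTree.trim ℓ t)).map (LTree.trimPos ℓ t)).getD (i + 1) []) :=
  span_erasure_order_compatible_general n ℓ t h hℓn
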